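/- arXiv:2507.09035 — 2 statements merged into one kernel-verified Lean document; each statement's English description precedes it below -/
import Mathlib

section
/- Let n ≥ 1 and A > 0. There exist constants c = c(n,A) > 0 and C = C(n,A) > 0 with the following property. Suppose u : ℝⁿ → ℝ is continuously differentiable on the closed ball B̄(0,2), the function x ↦ u(x) + (A/2)‖x‖² is convex on B̄(0,2), and the number b := ‖∇u(0)‖ satisfies ‖∇u(x)‖ ≤ b for all x ∈ B̄(0,2). If ∫_{B(0,2)} u² dx ≤ c, then b^{n+4} ≤ C · ∫_{B(0,2)} u² dx. -/
/-!
Semiconvexity bounds `u` below by its tangent paraboloid, `u y ≥ u 0 + ⟪∇u 0, y⟫ - A‖y‖² / 2`.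
Stepping a distance `8r ≤ b / A` from the origin in the direction of `∇u 0` therefore raises `u`
by at least `4br`, so `|u| ≥ 2br` at some point `p` of the unit ball. As `u` is `b`-Lipschitz,
`|u| ≥ br` on all of `ball p r`, whence `∫ u² ≥ b² r^(n+2) |B₁|`. The choice `r = b / (8A)` gives
the bound; when `b ≥ A`, the choice `r = 1/8` contradicts the smallness of `∫ u²`.
-/

open MeasureTheory Metric

open scoped RealInnerProductSpace

theorem ConvexOn.add_fderiv_sub_le {F : Type*} [NormedAddCommGroup F] [NormedSpace ℝ F]
    {s : Set F} {f : F → ℝ} {f' : F →L[ℝ] ℝ} {x y : F} (hf : ConvexOn ℝ s f) (hx : x ∈ s)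
    (hy : y ∈ s) (hfx : HasFDerivAt f f' x) : f x + f' (y - x) ≤ f y := by
  let ℓ : ℝ →ᵃ[ℝ] F := AffineMap.lineMap x y
  have hmaps : Set.MapsTo ℓ (Set.Icc 0 1) s := by
    simpa only [ℓ, Set.mapsTo_iff_image_subset, ← segment_eq_image_lineMap]
      using hf.1.segment_subset hx hy
  have hconv : ConvexOn ℝ (Set.Icc 0 1) (f ∘ ℓ) :=
    (hf.comp_affineMap ℓ).subset hmaps (convex_Icc 0 1)
  have hderiv : HasDerivAt (f ∘ ℓ) (f' (y - x)) 0 := by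
    have hℓ0 : ℓ 0 = x := AffineMap.lineMap_apply_zero x y
    exact (hℓ0 ▸ hfx).comp_hasDerivAt 0 AffineMap.hasDerivAt_lineMap
  have := hconv.le_slope_of_hasDerivAt (by simp) (by simp) zero_lt_one hderiv
  simp only [slope_def_field, Function.comp_apply, ℓ, AffineMap.lineMap_apply_zero,
    AffineMap.lineMap_apply_one, sub_zero, div_one] at this
  linarith

def SemiconvexOn {E : Type*} [NormedAddCommGroup E] [NormedSpace ℝ E] (A : ℝ) (s : Set E)
    (u : E → ℝ) : Prop :=
  ConvexOn ℝ s fun x => u x + A / 2 * ‖x‖ ^ 2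

section

variable {E : Type*} [NormedAddCommGroup E] [InnerProductSpace ℝ E]

theorem SemiconvexOn.add_inner_sub_le [CompleteSpace E] {A : ℝ} {s : Set E} {u : E → ℝ}
    {g x y : E} (hu : SemiconvexOn A s u) (hx : x ∈ s) (hy : y ∈ s) (hg : HasGradientAt u g x) :
    u x + ⟪g, y - x⟫ - A / 2 * ‖y - x‖ ^ 2 ≤ u y := by
  have hderiv := (hasGradientAt_iff_hasFDerivAt.1 hg).add
    ((hasStrictFDerivAt_norm_sq x).hasFDerivAt.const_mul (A / 2))
  have := hu.add_fderiv_sub_le hx hy hderiv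
  have hy' : ‖y‖ ^ 2 = ‖x‖ ^ 2 + 2 * ⟪x, y - x⟫ + ‖y - x‖ ^ 2 := by
    simpa using norm_add_sq_real x (y - x)
  simp only [add_apply, InnerProductSpace.toDual_apply_apply, smul_apply, smul_eq_mul,
    nsmul_eq_mul, Nat.cast_ofNat, innerSL_apply_apply] at this
  rw [hy'] at this
  linarith

theorem Convex.abs_sub_le_of_norm_gradient_le [CompleteSpace E] {s : Set E} (hs : Convex ℝ s)
    {u : E → ℝ} {b : ℝ} (hu : ∀ x ∈ s, DifferentiableAt ℝ u x)
    (hb : ∀ x ∈ s, ‖gradient u x‖ ≤ b) {x y : E} (hx : x ∈ s) (hy : y ∈ s) :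
    |u y - u x| ≤ b * ‖y - x‖ := by
  have hfderiv : ∀ z ∈ s, ‖fderiv ℝ u z‖ ≤ b := fun z hz => by
    simpa [gradient] using hb z hz
  simpa [Real.norm_eq_abs] using hs.norm_image_sub_le_of_norm_fderiv_le hu hfderiv hx hy

theorem SemiconvexOn.exists_le_abs_of_norm_le [CompleteSpace E] {A t : ℝ} {s : Set E}
    {u : E → ℝ} {g : E} (hu : SemiconvexOn A s u) (hs : closedBall 0 t ⊆ s)
    (hg : HasGradientAt u g 0) (ht : 0 ≤ t) (hAt : A * t ≤ ‖g‖) :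
    ∃ p ∈ closedBall (0 : E) t, t * ‖g‖ / 4 ≤ |u p| := by
  obtain rfl | hg0 := eq_or_ne g 0
  · exact ⟨0, mem_closedBall_self ht, by simp⟩
  have hb : 0 < ‖g‖ := norm_pos_iff.2 hg0
  set y := (t / ‖g‖) • g
  have hy : ‖y‖ = t := by
    rw [norm_smul, Real.norm_of_nonneg (by positivity), div_mul_cancel₀ _ hb.ne']
  have hgy : ⟪g, y⟫ = t * ‖g‖ := by
    rw [real_inner_smul_right, real_inner_self_eq_norm_sq]
    field_simp
  have hincr : u 0 + t * ‖g‖ / 2 ≤ u y := by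
    have := hu.add_inner_sub_le (hs (mem_closedBall_self ht))
      (hs (mem_closedBall_zero_iff.2 hy.le)) hg
    rw [sub_zero, hgy, hy] at this
    nlinarith [mul_le_mul_of_nonneg_right hAt ht]
  by_contra! hsmall
  have h0 := abs_lt.1 (hsmall 0 (mem_closedBall_self ht))
  have hy' := abs_lt.1 (hsmall y (mem_closedBall_zero_iff.2 hy.le))
  linarith

variable [FiniteDimensional ℝ E] [MeasurableSpace E] [BorelSpace E]

theorem MeasureTheory.Measure.addHaar_real_ball_of_pos (μ : Measure E) [μ.IsAddHaarMeasure]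
    (x : E) {r : ℝ} (hr : 0 < r) :
    μ.real (ball x r) = r ^ Module.finrank ℝ E * μ.real (ball 0 1) := by
  rw [measureReal_def, Measure.addHaar_ball_of_pos μ x hr, ENNReal.toReal_mul,
    ENNReal.toReal_ofReal (by positivity), measureReal_def]

theorem SemiconvexOn.sq_mul_measureReal_ball_le_integral_sq (μ : Measure E)
    [μ.IsAddHaarMeasure] {A r : ℝ} {u : E → ℝ}
    (hu : ContDiffOn ℝ 1 u (closedBall 0 2)) (hconv : SemiconvexOn A (closedBall 0 2) u)
    (hgrad : ∀ x ∈ closedBall (0 : E) 2, ‖gradient u x‖ ≤ ‖gradient u 0‖)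
    (hr : 0 ≤ r) (hr1 : 8 * r ≤ 1) (hAr : 8 * A * r ≤ ‖gradient u 0‖) :
    (‖gradient u 0‖ * r) ^ 2 * μ.real (ball 0 r) ≤ ∫ x in ball 0 2, u x ^ 2 ∂μ := by
  set b := ‖gradient u 0‖
  have hdiff : ∀ x ∈ ball (0 : E) 2, DifferentiableAt ℝ u x := fun x hx =>
    (hu.differentiableOn one_ne_zero).differentiableAt (closedBall_mem_nhds_of_mem hx)
  obtain ⟨p, hp, hup⟩ := hconv.exists_le_abs_of_norm_le (t := 8 * r)
    (closedBall_subset_closedBall (by linarith)) (hdiff 0 (mem_ball_self two_pos)).hasGradientAt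
    (by positivity) (by linarith)
  rw [mem_closedBall, dist_zero_right] at hp
  have hp2 : p ∈ ball (0 : E) 2 := mem_ball_zero_iff.2 (by linarith)
  have hsub : ball p r ⊆ ball 0 2 := ball_subset_ball' (by rw [dist_zero_right]; linarith)
  have hlarge : ∀ q ∈ ball p r, b * r ≤ |u q| := fun q hq => by
    have hlip := (convex_ball (0 : E) 2).abs_sub_le_of_norm_gradient_le hdiff
      (fun x hx => hgrad x (ball_subset_closedBall hx)) hp2 (hsub hq)
    have hqp : b * ‖q - p‖ ≤ b * r :=
      mul_le_mul_of_nonneg_left (mem_ball_iff_norm.1 hq).le (norm_nonneg _)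
    have := abs_sub_abs_le_abs_sub (u p) (u q)
    rw [abs_sub_comm] at this
    linarith
  have hint : IntegrableOn (fun x => u x ^ 2) (ball 0 2) μ :=
    ((hu.continuousOn.pow 2).integrableOn_compact (isCompact_closedBall 0 2)).mono_set
      ball_subset_closedBall
  calc (b * r) ^ 2 * μ.real (ball 0 r) = (b * r) ^ 2 * μ.real (ball p r) := by
        rw [Measure.addHaar_real_ball_center μ p]
    _ ≤ ∫ x in ball p r, u x ^ 2 ∂μ :=
        setIntegral_ge_of_const_le_real measurableSet_ball measure_ball_lt_top.ne
          (fun q hq => sq_abs (u q) ▸ pow_le_pow_left₀ (by positivity) (hlarge q hq) 2)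
          (hint.mono_set hsub)
    _ ≤ ∫ x in ball 0 2, u x ^ 2 ∂μ :=
        setIntegral_mono_set hint (ae_of_all _ fun x => sq_nonneg _) hsub.eventuallyLE

end

theorem semiconvex_gradient_bound_by_L2_general (n : ℕ) (A : ℝ) (hA : 0 < A) :
    ∃ c C : ℝ, 0 < c ∧ 0 < C ∧
      ∀ u : EuclideanSpace ℝ (Fin n) → ℝ,
        ContDiffOn ℝ 1 u (closedBall 0 2) →
        ConvexOn ℝ (closedBall 0 2) (fun x => u x + (A / 2) * ‖x‖ ^ 2) →
        (∀ x ∈ closedBall (0 : EuclideanSpace ℝ (Fin n)) 2,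
            ‖gradient u x‖ ≤ ‖gradient u 0‖) →
        (∫ x in ball (0 : EuclideanSpace ℝ (Fin n)) 2, u x ^ 2) ≤ c →
        ‖gradient u 0‖ ^ (n + 4) ≤
          C * ∫ x in ball (0 : EuclideanSpace ℝ (Fin n)) 2, u x ^ 2 := by
  set V := volume.real (ball (0 : EuclideanSpace ℝ (Fin n)) 1)
  have hV : 0 < V :=
    ENNReal.toReal_pos (measure_ball_pos volume 0 one_pos).ne' measure_ball_lt_top.ne
  have hvol (r : ℝ) (hr : 0 < r) :
      volume.real (ball (0 : EuclideanSpace ℝ (Fin n)) r) = r ^ n * V := by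
    rw [Measure.addHaar_real_ball_of_pos volume 0 hr, finrank_euclideanSpace_fin]
  refine ⟨(A / 8) ^ 2 * ((1 / 8) ^ n * V) / 2, (8 * A) ^ (n + 2) / V, by positivity,
    by positivity, ?_⟩
  intro u hu hconv hgrad hsmall
  have key (r : ℝ) :=
    SemiconvexOn.sq_mul_measureReal_ball_le_integral_sq volume hu hconv hgrad (r := r)
  have hb0 := norm_nonneg (gradient u 0)
  generalize ‖gradient u 0‖ = b at key hb0 ⊢
  obtain rfl | hb := hb0.eq_or_lt
  · rw [zero_pow (by omega)]
    exact mul_nonneg (by positivity) (setIntegral_nonneg measurableSet_ball fun x _ => sq_nonneg _)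
  obtain hAb | hbA := le_or_gt A b
  · have h := key (1 / 8) (by norm_num) (by norm_num) (by linarith)
    rw [hvol _ (by norm_num)] at h
    have hlow : (A / 8) ^ 2 * ((1 / 8) ^ n * V) ≤ (b * (1 / 8)) ^ 2 * ((1 / 8) ^ n * V) := by
      gcongr; linarith
    have : 0 < (A / 8) ^ 2 * ((1 / 8) ^ n * V) := by positivity
    linarith
  obtain ⟨r, hr0, hr⟩ : ∃ r : ℝ, 0 < r ∧ r * (8 * A) = b :=
    ⟨b / (8 * A), by positivity, div_mul_cancel₀ _ (by positivity)⟩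
  have h := key r hr0.le (le_of_mul_le_mul_right (by linarith) hA) (by linarith)
  rw [hvol r hr0] at h
  rw [div_mul_eq_mul_div, le_div_iff₀ hV]
  calc b ^ (n + 4) * V = b ^ 2 * (r * (8 * A)) ^ (n + 2) * V := by rw [hr]; ring
    _ = (8 * A) ^ (n + 2) * ((b * r) ^ 2 * (r ^ n * V)) := by ring
    _ ≤ (8 * A) ^ (n + 2) * ∫ x in ball 0 2, u x ^ 2 := by gcongr

/-- Proposition 5.2 of the paper (Euclidean-coordinate form): for an `A`-semiconvex `C¹`
function on the closed ball of radius 2 whose gradient attains its maximum norm `b` at the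
origin, smallness of the `L²` norm of `u` forces `b^{n+4} ≤ C ∫ u²`. -/
theorem semiconvex_gradient_bound_by_L2 (n : ℕ) (hn : 1 ≤ n) (A : ℝ) (hA : 0 < A) :
    ∃ c C : ℝ, 0 < c ∧ 0 < C ∧
      ∀ u : EuclideanSpace ℝ (Fin n) → ℝ,
        ContDiffOn ℝ 1 u (closedBall 0 2) →
        ConvexOn ℝ (closedBall 0 2) (fun x => u x + (A / 2) * ‖x‖ ^ 2) →
        (∀ x ∈ closedBall (0 : EuclideanSpace ℝ (Fin n)) 2,
            ‖gradient u x‖ ≤ ‖gradient u 0‖) →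
        (∫ x in ball (0 : EuclideanSpace ℝ (Fin n)) 2, u x ^ 2) ≤ c →
        ‖gradient u 0‖ ^ (n + 4) ≤
          C * ∫ x in ball (0 : EuclideanSpace ℝ (Fin n)) 2, u x ^ 2 :=
  semiconvex_gradient_bound_by_L2_general n A hA
end

section
/- Let n ≥ 1 and let h be a real symmetric n×n matrix. Then Σ_{i,j=1}^n h_{ij}² + (1/n)·(trace h)² ≥ (1 + 1/(2n)) · Σ_{k=1}^n h_{k1}²; that is, the squared Frobenius norm of h dominates (1 + 1/(2n)) times the squared Euclidean norm of the first column of h, up to an error of (1/n)(trace h)². -/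
/-!
Put `a = h₁₁`, `S = ∑ₖ hₖ₁²`, `t = tr h` and `D = ∑_{i ≠ 1} hᵢᵢ²`. By symmetry the first row and
the first column of `h` both contribute `S`, and the diagonal entries off the first row add `D`,
so `∑ᵢⱼ hᵢⱼ² ≥ 2S - a² + D`; Cauchy–Schwarz gives `n D ≥ (t - a)²`. Together these give
`2n (∑ᵢⱼ hᵢⱼ² + t²/n - (1 + 1/(2n)) S) ≥ (2n - 1)(S - a²) + (2t - a)² ≥ 0`.
-/

open Finset

lemma add_sq_le_sum_sq {ι : Type*} [Fintype ι] {f : ι → ℝ} {j k : ι} (hjk : j ≠ k) :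
    f j ^ 2 + f k ^ 2 ≤ ∑ i, f i ^ 2 := by
  classical
  rw [← sum_pair (f := fun i => f i ^ 2) hjk]
  exact sum_le_sum_of_subset_of_nonneg (subset_univ _) fun i _ _ => sq_nonneg _

namespace Matrix

variable {ι : Type*} [Fintype ι] [DecidableEq ι]

lemma two_mul_sum_sq_col_sub_add_sum_sq_diag_le {h : Matrix ι ι ℝ} (hsymm : h.IsSymm) (z : ι) :
    2 * ∑ k, h k z ^ 2 - h z z ^ 2 + ∑ i ∈ univ.erase z, h i i ^ 2 ≤ ∑ i, ∑ j, h i j ^ 2 := by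
  have hrow : ∑ j, h z j ^ 2 = ∑ k, h k z ^ 2 := by
    simp only [← hsymm.apply z]
  have hcol : ∑ i ∈ univ.erase z, h i z ^ 2 = ∑ k, h k z ^ 2 - h z z ^ 2 := by
    rw [← add_sum_erase _ (fun k => h k z ^ 2) (mem_univ z)]
    ring
  have hrest : ∑ i ∈ univ.erase z, (h i z ^ 2 + h i i ^ 2) ≤
      ∑ i ∈ univ.erase z, ∑ j, h i j ^ 2 :=
    sum_le_sum fun i hi => add_sq_le_sum_sq (ne_of_mem_erase hi).symm
  rw [sum_add_distrib, hcol] at hrest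
  rw [← add_sum_erase _ (fun i => ∑ j, h i j ^ 2) (mem_univ z), hrow]
  linarith

lemma sq_trace_sub_diag_le (h : Matrix ι ι ℝ) (z : ι) :
    (h.trace - h z z) ^ 2 ≤ Fintype.card ι * ∑ i ∈ univ.erase z, h i i ^ 2 := by
  have htrace : h.trace - h z z = ∑ i ∈ univ.erase z, h i i := by
    rw [trace, ← add_sum_erase _ _ (mem_univ z)]
    simp only [diag_apply, add_sub_cancel_left]
  rw [htrace]
  refine (sq_sum_le_card_mul_sum_sq (s := univ.erase z) (f := fun i => h i i)).trans ?_
  gcongr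
  exact_mod_cast card_le_univ _

end Matrix

lemma le_add_one_div_mul_sq {N A S D a t : ℝ} (hN : 1 ≤ N) (hA : 2 * S - a ^ 2 + D ≤ A)
    (hD : (t - a) ^ 2 ≤ N * D) (hS : a ^ 2 ≤ S) :
    (1 + 1 / (2 * N)) * S ≤ A + 1 / N * t ^ 2 := by
  have hN0 : 0 < N := by linarith
  have key : 0 ≤ 2 * N * A + 2 * t ^ 2 - (2 * N + 1) * S := by
    nlinarith [sq_nonneg (2 * t - a), mul_nonneg (by linarith : 0 ≤ 2 * N - 1) (sub_nonneg.2 hS)]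
  have hdiff : A + 1 / N * t ^ 2 - (1 + 1 / (2 * N)) * S =
      (2 * N * A + 2 * t ^ 2 - (2 * N + 1) * S) / (2 * N) := by
    field_simp
  rw [← sub_nonneg, hdiff]
  positivity

/-- Algebraic inequality from Step 3 of the paper (following display (6.24)): for a symmetric
`n×n` matrix `h`, the squared Frobenius norm plus `(1/n)(trace h)²` dominates `(1 + 1/(2n))`
times the squared Euclidean norm of the first column of `h`. -/
theorem frobenius_first_column_inequality (n : ℕ) (hn : 1 ≤ n)
    (h : Matrix (Fin n) (Fin n) ℝ) (hsymm : h.IsSymm) :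
    (∑ i, ∑ j, h i j ^ 2) + (1 / (n : ℝ)) * h.trace ^ 2 ≥
      (1 + 1 / (2 * (n : ℝ))) * ∑ k, h k ⟨0, hn⟩ ^ 2 := by
  have hD := h.sq_trace_sub_diag_le ⟨0, hn⟩
  rw [Fintype.card_fin] at hD
  exact le_add_one_div_mul_sq (by exact_mod_cast hn)
    (Matrix.two_mul_sum_sq_col_sub_add_sum_sq_diag_le hsymm ⟨0, hn⟩) hD
    (single_le_sum (f := fun k => h k ⟨0, hn⟩ ^ 2) (fun _ _ => sq_nonneg _) (mem_univ _))
end
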